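/- The number A_{S,n} of compositions of n with parts in S satisfies A_{S,n} = C·α^n + o(α^n) for some nonzero constant C, where α is the unique positive real root of z^m − ∑_{i=1}^{k-1} z^{m−s_i} − 1. -/

import Mathlib

/-- The number of compositions of `n` with all parts in `S`. -/
noncomputable def compCount (S : Finset ℕ) (n : ℕ) : ℕ :=
  Nat.card {l : List ℕ // l.sum = n ∧ ∀ p ∈ l, p ∈ S}

/-!
Dividing by `α ^ n` turns `A n = ∑ x ∈ S, A (n - x)` into a renewal equation
`b n = ∑ x ∈ S, α⁻¹ ^ x * b (n - x)`, whose weights sum to `1` precisely because `α` is a root of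
the characteristic polynomial. Then every `b p` with `p ≥ n` is a convex combination of values in
the window `[n, n + m]`, so window maxima decrease and window minima increase. As the parts have
gcd `1`, every large `r` is a sum of parts; the deficit below the window maximum at the point
where the window minimum is attained propagates along such sums to the whole window `N₀ + 2m`
steps later, so the oscillation of `b` shrinks geometrically and `b` is Cauchy. Its limit is
positive because `b` is positive on a whole window.
-/

open Filter Topology Finset

section Compositions

variable {S : Finset ℕ} {n : ℕ}

abbrev CompositionIn (S : Finset ℕ) (n : ℕ) : Type :=
  {l : List ℕ // l.sum = n ∧ ∀ p ∈ l, p ∈ S}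

theorem finite_compositionIn (h0 : 0 ∉ S) (n : ℕ) : Finite (CompositionIn S n) :=
  Finite.of_injective
    (fun l : CompositionIn S n => (⟨l.1, fun hp => Nat.pos_of_ne_zero
      fun h => h0 (h ▸ l.2.2 _ hp), l.2.1⟩ : Composition n))
    fun _ _ h => Subtype.ext (congrArg Composition.blocks h)

def CompositionIn.cons (x : ({x ∈ S | x ≤ n} : Finset ℕ)) (l : CompositionIn S (n - x)) :
    CompositionIn S n :=
  ⟨x.1 :: l.1, by grind, by grind⟩

theorem CompositionIn.cons_bijective (hn : n ≠ 0) :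
    Function.Bijective fun q : Σ x : ({x ∈ S | x ≤ n} : Finset ℕ), CompositionIn S (n - x) =>
      CompositionIn.cons q.1 q.2 := by
  refine ⟨fun ⟨x, l⟩ ⟨y, t⟩ h => ?_, fun ⟨l, hsum, hS⟩ => ?_⟩
  · simp only [CompositionIn.cons, Subtype.mk.injEq, List.cons.injEq] at h
    obtain ⟨hxy, hlt⟩ := h
    obtain rfl : x = y := Subtype.ext hxy
    obtain rfl : l = t := Subtype.ext hlt
    rfl
  · cases l with
    | nil => exact absurd hsum.symm (by simpa using hn)
    | cons x t =>
      exact ⟨⟨⟨x, by grind⟩, ⟨t, by grind, by grind⟩⟩, rfl⟩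

theorem compCount_eq_sum (h0 : 0 ∉ S) (hn : n ≠ 0) :
    compCount S n = ∑ x ∈ S with x ≤ n, compCount S (n - x) := by
  have := finite_compositionIn h0
  rw [compCount, ← Nat.card_congr (Equiv.ofBijective _ (CompositionIn.cons_bijective hn)),
    Nat.card_sigma]
  exact sum_coe_sort _ fun x => compCount S (n - x)

theorem compCount_pos (h0 : 0 ∉ S) (hn : n ∈ AddSubmonoid.closure (S : Set ℕ)) :
    0 < compCount S n := by
  obtain ⟨l, hl, rfl⟩ := AddSubmonoid.exists_list_of_mem_closure hn
  have := finite_compositionIn h0 l.sum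
  have : Nonempty (CompositionIn S l.sum) := ⟨⟨l, rfl, hl⟩⟩
  exact Nat.card_pos

theorem eventually_compCount_pos (h0 : 0 ∉ S) (hgcd : Nat.setGcd (S : Set ℕ) = 1) :
    ∀ᶠ n in atTop, 0 < compCount S n := by
  obtain ⟨N, hN⟩ := Nat.exists_mem_closure_of_ge (S : Set ℕ)
  exact eventually_atTop.2 ⟨N, fun n hn => compCount_pos h0 (hN n hn (hgcd ▸ one_dvd n))⟩

end Compositions

theorem tendsto_zero_of_antitone_of_add_le_mul {u : ℕ → ℝ} {N : ℕ} {c : ℝ} (hu : Antitone u)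
    (hu0 : ∀ n, 0 ≤ u n) (hN : N ≠ 0) (hc0 : 0 ≤ c) (hc1 : c < 1)
    (h : ∀ n, u (n + N) ≤ c * u n) : Tendsto u atTop (𝓝 0) := by
  have hgeom : ∀ k, u (N * k) ≤ c ^ k * u 0 := by
    intro k
    induction k with
    | zero => simp
    | succ k ih =>
      calc u (N * (k + 1)) ≤ c * u (N * k) := by rw [mul_add_one]; exact h _
        _ ≤ c * (c ^ k * u 0) := by gcongr
        _ = c ^ (k + 1) * u 0 := by ring
  have hlim : Tendsto (fun n => c ^ (n / N) * u 0) atTop (𝓝 0) := by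
    simpa using ((tendsto_pow_atTop_nhds_zero_of_lt_one hc0 hc1).comp
      (Nat.tendsto_div_const_atTop hN)).mul_const (u 0)
  exact squeeze_zero hu0 (fun n => (hu (Nat.mul_div_le n N)).trans (hgeom _)) hlim

structure IsRenewal (S : Finset ℕ) (m : ℕ) (w a : ℕ → ℝ) : Prop where
  pos_of_mem : ∀ x ∈ S, 0 < x
  le_of_mem : ∀ x ∈ S, x ≤ m
  mem : m ∈ S
  weight_pos : ∀ x ∈ S, 0 < w x
  sum_weight : ∑ x ∈ S, w x = 1
  eq_sum : ∀ p, m ≤ p → a p = ∑ x ∈ S, w x * a (p - x)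

noncomputable def windowMax (a : ℕ → ℝ) (m n : ℕ) : ℝ :=
  (Icc n (n + m)).sup' (nonempty_Icc.2 (Nat.le_add_right n m)) a

noncomputable def windowMin (a : ℕ → ℝ) (m n : ℕ) : ℝ :=
  (Icc n (n + m)).inf' (nonempty_Icc.2 (Nat.le_add_right n m)) a

namespace IsRenewal

variable {S : Finset ℕ} {m : ℕ} {w a : ℕ → ℝ} {n p : ℕ}

theorem neg (h : IsRenewal S m w a) : IsRenewal S m w (-a) :=
  { h with eq_sum := fun p hp => by simp [h.eq_sum p hp, sum_neg_distrib] }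

theorem le_of_le_window (h : IsRenewal S m w a) {B : ℝ} (hB : ∀ q ∈ Icc n (n + m), a q ≤ B)
    (hp : n ≤ p) : a p ≤ B := by
  induction p using Nat.strong_induction_on with
  | _ p ih =>
    by_cases hpm : p ≤ n + m
    · exact hB p (mem_Icc.2 ⟨hp, hpm⟩)
    rw [h.eq_sum p (by omega)]
    calc ∑ x ∈ S, w x * a (p - x) ≤ ∑ x ∈ S, w x * B := by
          gcongr with x hx
          · exact (h.weight_pos x hx).le
          · have := h.pos_of_mem x hx
            have := h.le_of_mem x hx
            exact ih (p - x) (by omega) (by omega)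
      _ = B := by rw [← sum_mul, h.sum_weight, one_mul]

theorem le_windowMax (h : IsRenewal S m w a) (hp : n ≤ p) : a p ≤ windowMax a m n :=
  h.le_of_le_window (fun _ hq => le_sup' a hq) hp

theorem windowMin_le (h : IsRenewal S m w a) (hp : n ≤ p) : windowMin a m n ≤ a p := by
  have := h.neg.le_of_le_window (B := -windowMin a m n)
    (fun q hq => neg_le_neg (inf'_le a hq)) hp
  simpa using this

theorem antitone_windowMax (h : IsRenewal S m w a) : Antitone (windowMax a m) :=
  fun _ _ hn => sup'_le _ _ fun _ hq => h.le_windowMax (hn.trans (mem_Icc.1 hq).1)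

theorem monotone_windowMin (h : IsRenewal S m w a) : Monotone (windowMin a m) :=
  fun _ _ hn => le_inf' _ _ fun _ hq => h.windowMin_le (hn.trans (mem_Icc.1 hq).1)

theorem windowMin_le_windowMax (h : IsRenewal S m w a) (n : ℕ) :
    windowMin a m n ≤ windowMax a m n :=
  (h.windowMin_le le_rfl).trans (h.le_windowMax le_rfl)

theorem le_sub_mul_of_le_sub (h : IsRenewal S m w a) {B ε : ℝ} (hB : ∀ q, n ≤ q → a q ≤ B)
    (hp : n + m ≤ p) {x : ℕ} (hx : x ∈ S) (hpx : a (p - x) ≤ B - ε) :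
    a p ≤ B - w x * ε := by
  have hdef : B - a p = ∑ y ∈ S, w y * (B - a (p - y)) := by
    simp only [mul_sub, sum_sub_distrib, ← sum_mul, h.sum_weight, one_mul, h.eq_sum p (by omega)]
  have hle : w x * (B - a (p - x)) ≤ ∑ y ∈ S, w y * (B - a (p - y)) :=
    single_le_sum (f := fun y => w y * (B - a (p - y))) (fun y hy =>
      mul_nonneg (h.weight_pos y hy).le (sub_nonneg.2 (hB _ (by
        have := h.le_of_mem y hy; omega)))) hx
  have := mul_le_mul_of_nonneg_left (le_sub_comm.1 hpx) (h.weight_pos x hx).le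
  linarith

theorem le_sub_pow_mul_of_mem_closure (h : IsRenewal S m w a) {c B ε : ℝ} (hc0 : 0 ≤ c)
    (hc1 : c ≤ 1) (hcw : ∀ x ∈ S, c ≤ w x) (hε : 0 ≤ ε) (hB : ∀ q, n ≤ q → a q ≤ B) {j : ℕ}
    (hj : n ≤ j) (haj : a j ≤ B - ε) {r : ℕ} (hr : r ∈ AddSubmonoid.closure (S : Set ℕ)) :
    a (j + r + m) ≤ B - c ^ (r + m) * ε := by
  have hcx : ∀ x ∈ S, c ^ x ≤ w x := fun x hx =>
    (pow_le_of_le_one hc0 hc1 (h.pos_of_mem x hx).ne').trans (hcw x hx)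
  induction hr using AddSubmonoid.closure_induction_left with
  | zero =>
    have := h.le_sub_mul_of_le_sub hB (p := j + 0 + m) (by omega) h.mem (by simpa using haj)
    rw [zero_add]
    exact this.trans (sub_le_sub_left (mul_le_mul_of_nonneg_right (hcx m h.mem) hε) B)
  | add_left x hx r _ ih =>
    have := h.le_sub_mul_of_le_sub hB (p := j + (x + r) + m) (by omega) hx
      (by rwa [show j + (x + r) + m - x = j + r + m by omega])
    calc a (j + (x + r) + m) ≤ B - w x * (c ^ (r + m) * ε) := this
      _ ≤ B - c ^ (x + r + m) * ε := by
        rw [add_assoc x, pow_add c x, mul_assoc]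
        exact sub_le_sub_left
          (mul_le_mul_of_nonneg_right (hcx x hx) (mul_nonneg (pow_nonneg hc0 _) hε)) B

theorem windowMax_sub_windowMin_add_le (h : IsRenewal S m w a) {c : ℝ} (hc0 : 0 ≤ c)
    (hc1 : c ≤ 1) (hcw : ∀ x ∈ S, c ≤ w x) {N₀ : ℕ}
    (hN₀ : ∀ r, N₀ ≤ r → r ∈ AddSubmonoid.closure (S : Set ℕ)) (n : ℕ) :
    windowMax a m (n + (N₀ + 2 * m)) - windowMin a m (n + (N₀ + 2 * m)) ≤
      (1 - c ^ (N₀ + 3 * m)) * (windowMax a m n - windowMin a m n) := by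
  -- The deficit at the minimiser `j` reaches every `p = j + r + m` of the later window, since
  -- `r ≥ N₀` is a sum of parts.
  obtain ⟨j, hj, haj⟩ := exists_mem_eq_inf' (nonempty_Icc.2 (Nat.le_add_right n m)) a
  change windowMin a m n = a j at haj
  rw [mem_Icc] at hj
  have hε := sub_nonneg.2 (h.windowMin_le_windowMax n)
  have hmax : windowMax a m (n + (N₀ + 2 * m)) ≤
      windowMax a m n - c ^ (N₀ + 3 * m) * (windowMax a m n - windowMin a m n) := by
    refine sup'_le _ _ fun p hp => ?_
    rw [mem_Icc] at hp
    obtain ⟨r, rfl⟩ : ∃ r, p = j + r + m := ⟨p - j - m, by omega⟩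
    calc a (j + r + m) ≤ windowMax a m n - c ^ (r + m) * (windowMax a m n - windowMin a m n) :=
          h.le_sub_pow_mul_of_mem_closure hc0 hc1 hcw hε (fun q hq => h.le_windowMax hq) hj.1
            (by rw [haj]; linarith) (hN₀ r (by omega))
      _ ≤ windowMax a m n - c ^ (N₀ + 3 * m) * (windowMax a m n - windowMin a m n) :=
          sub_le_sub_left (mul_le_mul_of_nonneg_right
            (pow_le_pow_of_le_one hc0 hc1 (by omega)) hε) _
  have hmin := h.monotone_windowMin (Nat.le_add_right n (N₀ + 2 * m))
  linarith

theorem pos_of_tendsto (h : IsRenewal S m w a) {C : ℝ} (hC : Tendsto a atTop (𝓝 C))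
    (hpos : ∀ᶠ p in atTop, 0 < a p) : 0 < C := by
  obtain ⟨n, hn⟩ := eventually_atTop.1 hpos
  have hmin : 0 < windowMin a m n := (lt_inf'_iff _).2 fun p hp => hn p (mem_Icc.1 hp).1
  exact hmin.trans_le (ge_of_tendsto hC (eventually_atTop.2 ⟨n, fun p hp => h.windowMin_le hp⟩))

theorem exists_tendsto (h : IsRenewal S m w a) (hgcd : Nat.setGcd (S : Set ℕ) = 1) :
    ∃ C, Tendsto a atTop (𝓝 C) := by
  obtain ⟨N₀, hN₀⟩ := Nat.exists_mem_closure_of_ge (S : Set ℕ)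
  set c := S.inf' ⟨m, h.mem⟩ w
  have hc0 : 0 < c := (lt_inf'_iff _).2 h.weight_pos
  have hcw : ∀ x ∈ S, c ≤ w x := fun x hx => inf'_le w hx
  have hc1 : c ≤ 1 := (hcw m h.mem).trans <| h.sum_weight ▸
    single_le_sum (fun x hx => (h.weight_pos x hx).le) h.mem
  have hosc : Tendsto (fun n => windowMax a m n - windowMin a m n) atTop (𝓝 0) :=
    tendsto_zero_of_antitone_of_add_le_mul
      (fun _ _ hn => sub_le_sub (h.antitone_windowMax hn) (h.monotone_windowMin hn))
      (fun n => sub_nonneg.2 (h.windowMin_le_windowMax n))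
      (by have := h.pos_of_mem m h.mem; omega) (sub_nonneg.2 (pow_le_one₀ hc0.le hc1))
      (sub_lt_self 1 (pow_pos hc0 _))
      (h.windowMax_sub_windowMin_add_le hc0.le hc1 hcw
        fun r hr => hN₀ r hr (hgcd ▸ one_dvd r))
  refine cauchySeq_tendsto_of_complete (cauchySeq_of_le_tendsto_0 _ (fun p q n hp hq => ?_) hosc)
  rw [Real.dist_eq, abs_sub_le_iff]
  constructor <;> linarith [h.le_windowMax hp, h.le_windowMax hq, h.windowMin_le hp,
    h.windowMin_le hq]

end IsRenewal

theorem isRenewal_compCount_div_pow {S : Finset ℕ} {m : ℕ} {α : ℝ} (hpos : ∀ x ∈ S, 0 < x)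
    (hle : ∀ x ∈ S, x ≤ m) (hmS : m ∈ S) (hα : 0 < α) (hsum : ∑ x ∈ S, (α ^ x)⁻¹ = 1) :
    IsRenewal S m (fun x => (α ^ x)⁻¹) (fun n => compCount S n / α ^ n) where
  pos_of_mem := hpos
  le_of_mem := hle
  mem := hmS
  weight_pos _ _ := by positivity
  sum_weight := hsum
  eq_sum p hp := by
    have hp0 : p ≠ 0 := (hpos m hmS).trans_le hp |>.ne'
    rw [compCount_eq_sum (fun h => (hpos 0 h).false) hp0,
      filter_true_of_mem fun x hx => (hle x hx).trans hp, Nat.cast_sum, sum_div]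
    refine sum_congr rfl fun x hx => ?_
    rw [← Nat.sub_add_cancel ((hle x hx).trans hp), pow_add, Nat.add_sub_cancel]
    field_simp

theorem sum_inv_pow_eq_one_of_root {k : ℕ} (s : Fin k → ℕ) (last : Fin k)
    (hlast : (last : ℕ) = k - 1) (hs : ∀ i, s i ≤ s last) {α : ℝ} (hα : α ≠ 0)
    (hroot : α ^ s last -
      (∑ i ∈ univ.filter (fun i : Fin k => (i : ℕ) < k - 1), α ^ (s last - s i)) - 1 = 0) :
    ∑ i, (α ^ s i)⁻¹ = 1 := by
  have hfilter : univ.filter (fun i : Fin k => (i : ℕ) < k - 1) = univ.erase last := by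
    ext i
    simp only [mem_filter, mem_univ, true_and, mem_erase, ne_eq, and_true, Fin.ext_iff, hlast]
    omega
  rw [hfilter] at hroot
  rw [← sum_erase_add _ _ (mem_univ last)]
  have hterm : ∀ i, (α ^ s i)⁻¹ = α ^ (s last - s i) / α ^ s last := fun i => by
    rw [pow_sub₀ α hα (hs i)]
    field_simp
  rw [sum_congr rfl fun i _ => hterm i, hterm, ← sum_div, ← add_div, Nat.sub_self, pow_zero,
    div_eq_one_iff_eq (pow_ne_zero _ hα)]
  linarith

open Filter in
theorem compCount_asymptotics (k : ℕ) (hk : 2 ≤ k) (s : Fin k → ℕ)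
    (hmono : StrictMono s) (hpos : ∀ i, 0 < s i)
    (hgcd : (Finset.univ.filter (fun i : Fin k => (i : ℕ) < k - 1)).gcd s = 1)
    (S : Finset ℕ) (hS : S = Finset.image s Finset.univ)
    (m : ℕ) (hm : m = s ⟨k - 1, by omega⟩)
    (α : ℝ) (hαpos : 0 < α)
    (hαroot : α ^ m -
      (∑ i ∈ Finset.univ.filter (fun i : Fin k => (i : ℕ) < k - 1), α ^ (m - s i)) - 1 = 0) :
    ∃ C : ℝ, C ≠ 0 ∧
      Tendsto (fun n : ℕ => ((compCount S n : ℝ) - C * α ^ n) / α ^ n) atTop (nhds 0) := by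
  subst hS hm
  have hsm : ∀ i, s i ≤ s ⟨k - 1, by omega⟩ := fun i =>
    hmono.monotone (Fin.le_def.2 (Nat.le_sub_one_of_lt i.isLt))
  have hsum : ∑ x ∈ image s univ, (α ^ x)⁻¹ = 1 := by
    rw [sum_image fun i _ j _ h => hmono.injective h]
    exact sum_inv_pow_eq_one_of_root s _ rfl hsm hαpos.ne' hαroot
  have hgcdS : Nat.setGcd (image s univ : Set ℕ) = 1 :=
    Nat.dvd_one.1 (hgcd ▸ dvd_gcd fun i _ => Nat.setGcd_dvd_of_mem (by simp))
  have hren := isRenewal_compCount_div_pow (by simpa using hpos) (by simpa using hsm)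
    (mem_image_of_mem s (mem_univ _)) hαpos hsum
  obtain ⟨C, hC⟩ := hren.exists_tendsto hgcdS
  have hCpos := hren.pos_of_tendsto hC <|
    (eventually_compCount_pos (by simpa using fun i => (hpos i).ne') hgcdS).mono
      fun n hn => by positivity
  refine ⟨C, hCpos.ne', ?_⟩
  simpa [sub_div, mul_div_assoc, div_self (pow_ne_zero _ hαpos.ne')] using hC.sub_const C
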